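/- arXiv:1903.11620 — 11 statements merged into one kernel-verified Lean document; each statement's English description precedes it below -/
import Mathlib

section
/- Let S_1,...,S_m be subgroups of a finite abelian group G such that the sets S_1 \ {0}, ..., S_m \ {0} partition G \ {0}, and |S_i| > 2 for each i. Then the collection {S_1 \ {0}, ..., S_m \ {0}} has the bimodal property. -/
variable {G : Type*} [AddCommGroup G] [Fintype G]

/-- `N A i δ` counts the pairs `(a, b)` with `a ∈ A i`, `b ∈ A j` for some `j ≠ i`,
and `a - b = δ`. -/
noncomputable def bimodalCount {ι : Type*} (A : ι → Set G) (i : ι) (δ : G) : ℕ :=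
  {p : G × G | p.1 ∈ A i ∧ (∃ j, j ≠ i ∧ p.2 ∈ A j) ∧ p.1 - p.2 = δ}.ncard

/-- A collection of subsets has the bimodal property if every nonzero `δ` occurs as
an external difference out of `A i` either `0` or `|A i|` times. -/
def IsBimodal {ι : Type*} (A : ι → Set G) : Prop :=
  ∀ δ : G, δ ≠ 0 → ∀ i : ι,
    bimodalCount A i δ = 0 ∨ bimodalCount A i δ = (A i).ncard

/-- The internal difference group of a subset `X`: the subgroup generated by all
differences of elements of `X`. -/
def idg (X : Set G) : AddSubgroup G :=
  AddSubgroup.closure {d : G | ∃ x ∈ X, ∃ y ∈ X, x - y = d}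

/-- A group partition of a finite abelian group with all parts of order
greater than 2 yields a bimodal collection. -/
theorem group_partition_bimodal {m : ℕ} (S : Fin m → AddSubgroup G)
    (hcard : ∀ i, 2 < Nat.card (S i))
    (hdisj : ∀ i j, i ≠ j → Disjoint ((S i : Set G) \ {0}) ((S j : Set G) \ {0}))
    (hcover : (⋃ i, ((S i : Set G) \ {0})) = (Set.univ : Set G) \ {0}) :
    IsBimodal (fun i => (S i : Set G) \ {0}) := by
  intro δ hδ i
  by_cases hmem : δ ∈ S i
  · left
    unfold bimodalCount
    convert Set.ncard_empty (G × G)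
    ext ⟨a, b⟩
    simp only [Set.mem_setOf_eq, Set.mem_empty_iff_false, iff_false]
    rintro ⟨⟨ha, ha0⟩, ⟨j, hji, hbj, hb0⟩, hab⟩
    have hb : b ∈ S i := by
      have hba : b = a - δ := by rw [← hab]; abel
      rw [hba]; exact sub_mem ha hmem
    exact Set.disjoint_left.mp (hdisj i j hji.symm) ⟨hb, hb0⟩ ⟨hbj, hb0⟩
  · right
    unfold bimodalCount
    have himg : {p : G × G | p.1 ∈ ((S i : Set G) \ {0}) ∧
        (∃ j, j ≠ i ∧ p.2 ∈ ((S j : Set G) \ {0})) ∧ p.1 - p.2 = δ}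
        = (fun a => (a, a - δ)) '' ((S i : Set G) \ {0}) := by
      ext ⟨a, b⟩
      simp only [Set.mem_setOf_eq, Set.mem_image, Prod.mk.injEq]
      constructor
      · rintro ⟨ha, _, hab⟩
        exact ⟨a, ha, rfl, by rw [← hab]; abel⟩
      · rintro ⟨x, hx, rfl, rfl⟩
        refine ⟨hx, ?_, by abel⟩
        have hne : x - δ ≠ 0 := by
          intro h
          apply hmem
          rw [(sub_eq_zero.mp h).symm]; exact hx.1
        have hmemU : x - δ ∈ ⋃ j, ((S j : Set G) \ {0}) := by
          rw [hcover]; exact ⟨Set.mem_univ _, hne⟩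
        obtain ⟨j, hj⟩ := Set.mem_iUnion.mp hmemU
        refine ⟨j, ?_, hj⟩
        rintro rfl
        apply hmem
        have hd : δ = x - (x - δ) := by abel
        rw [hd]; exact sub_mem hx.1 hj.1
    rw [himg]
    exact Set.ncard_image_of_injective _ (fun x y h => (Prod.mk.injEq _ _ _ _ ▸ h).1)
end

section
/- A collection {A_1,...,A_m} of pairwise disjoint subsets of a finite abelian group G has the bimodal property if and only if for each i, the set B_i = (⋃_{j} A_j) \ A_i is a union of cosets of H_i, where H_i is the internal difference group of A_i. -/
variable {G : Type*} [AddCommGroup G] [Fintype G]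

lemma mem_diff_iff_aux {m : ℕ} (A : Fin m → Set G)
    (hdisj : ∀ i j, i ≠ j → Disjoint (A i) (A j)) (i : Fin m) (b : G) :
    b ∈ (⋃ j, A j) \ A i ↔ ∃ j, j ≠ i ∧ b ∈ A j := by
  constructor
  · rintro ⟨hb, hbi⟩
    rcases Set.mem_iUnion.1 hb with ⟨j, hj⟩
    exact ⟨j, fun h => hbi (h ▸ hj), hj⟩
  · rintro ⟨j, hji, hj⟩
    exact ⟨Set.mem_iUnion.2 ⟨j, hj⟩, fun hbi => Set.disjoint_left.1 (hdisj j i hji) hj hbi⟩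

lemma bimodalCount_eq_aux {m : ℕ} (A : Fin m → Set G)
    (hdisj : ∀ i j, i ≠ j → Disjoint (A i) (A j)) (i : Fin m) (δ : G) :
    bimodalCount A i δ = {a : G | a ∈ A i ∧ a - δ ∈ (⋃ j, A j) \ A i}.ncard := by
  have hinj : Function.Injective (fun a : G => (a, a - δ)) := by
    intro a b h
    simpa using congrArg Prod.fst h
  have hset : {p : G × G | p.1 ∈ A i ∧ (∃ j, j ≠ i ∧ p.2 ∈ A j) ∧ p.1 - p.2 = δ}
      = (fun a : G => (a, a - δ)) '' {a : G | a ∈ A i ∧ a - δ ∈ (⋃ j, A j) \ A i} := by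
    ext ⟨a, b⟩
    simp only [Set.mem_setOf_eq, Set.mem_image, Prod.mk.injEq]
    constructor
    · rintro ⟨ha, hb, hab⟩
      have hb' : b = a - δ := by rw [← hab, sub_sub_cancel]
      exact ⟨a, ⟨ha, hb' ▸ (mem_diff_iff_aux A hdisj i b).2 hb⟩, rfl, hb'.symm⟩
    · rintro ⟨x, ⟨hx, hxδ⟩, rfl, rfl⟩
      exact ⟨hx, (mem_diff_iff_aux A hdisj i _).1 hxδ, by abel⟩
  rw [bimodalCount, hset, Set.ncard_image_of_injective _ hinj]

/-- A collection of pairwise disjoint nonempty subsets is bimodal iff for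
each `i` the set `B i = (⋃ j, A j) \ A i` is a union of cosets of the internal
difference group of `A i`. -/
theorem bimodal_iff_union_of_cosets {m : ℕ} (A : Fin m → Set G)
    (hne : ∀ i, (A i).Nonempty)
    (hdisj : ∀ i j, i ≠ j → Disjoint (A i) (A j)) :
    IsBimodal A ↔
      ∀ i : Fin m, ∀ b ∈ (⋃ j, A j) \ A i, ∀ h ∈ idg (A i),
        b + h ∈ (⋃ j, A j) \ A i := by
  constructor
  · intro hbim i
    set B : Set G := (⋃ j, A j) \ A i with hB
    -- the set of "good" translations is a subgroup
    set P : G → Prop := fun h => ∀ b ∈ B, b + h ∈ B with hPdef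
    have P0 : P 0 := fun b hb => by simpa using hb
    have Padd : ∀ h₁ h₂, P h₁ → P h₂ → P (h₁ + h₂) := by
      intro h₁ h₂ H1 H2 b hb
      have := H2 _ (H1 b hb)
      rwa [add_assoc] at this
    have Pnsmul : ∀ (n : ℕ) (h : G), P h → P (n • h) := by
      intro n h Ph
      induction n with
      | zero => simpa using P0
      | succ k ih => rw [succ_nsmul]; exact Padd _ _ ih Ph
    have Pneg : ∀ h, P h → P (-h) := by
      intro h Ph
      have hpos : 0 < addOrderOf h := addOrderOf_pos h
      have hkey : (addOrderOf h - 1) • h = -h := by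
        have h0 : (addOrderOf h - 1) • h + h = 0 := by
          rw [← succ_nsmul, Nat.sub_add_cancel hpos, addOrderOf_nsmul_eq_zero]
        exact eq_neg_of_add_eq_zero_left h0
      rw [← hkey]
      exact Pnsmul _ _ Ph
    have Pgen : ∀ d ∈ {d : G | ∃ x ∈ A i, ∃ y ∈ A i, x - y = d}, P d := by
      rintro d ⟨x, hx, y, hy, rfl⟩ b hb
      have hbni : b ∉ A i := hb.2
      have hδ : y - b ≠ 0 := sub_ne_zero.2 (fun h => hbni (h ▸ hy))
      have hcount := hbim (y - b) hδ i
      rw [bimodalCount_eq_aux A hdisj i] at hcount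
      set T : Set G := {a : G | a ∈ A i ∧ a - (y - b) ∈ B} with hT
      have hyT : y ∈ T := ⟨hy, by simpa [sub_sub_cancel] using hb⟩
      have hTne : T.ncard ≠ 0 := by
        have : 0 < T.ncard := (Set.ncard_pos (Set.toFinite _)).2 ⟨y, hyT⟩
        omega
      rcases hcount with h0 | hfull
      · exact absurd h0 hTne
      · have hsub : T ⊆ A i := fun a ha => ha.1
        have hTA : T = A i :=
          Set.eq_of_subset_of_ncard_le hsub hfull.ge (Set.toFinite _)
        have hxT : x ∈ T := hTA.symm ▸ hx
        have heq : b + (x - y) = x - (y - b) := by abel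
        rw [heq]
        exact hxT.2
    let K : AddSubgroup G :=
      { carrier := setOf P
        zero_mem' := P0
        add_mem' := fun ha hb => Padd _ _ ha hb
        neg_mem' := fun ha => Pneg _ ha }
    have hle : idg (A i) ≤ K := (AddSubgroup.closure_le K).2 Pgen
    intro b hb h hh
    exact hle hh b hb
  · intro hcos δ hδ i
    rw [bimodalCount_eq_aux A hdisj i]
    set B : Set G := (⋃ j, A j) \ A i with hB
    set T : Set G := {a : G | a ∈ A i ∧ a - δ ∈ B} with hT
    rcases T.eq_empty_or_nonempty with hTe | ⟨a₀, ha₀⟩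
    · left; rw [hTe]; exact Set.ncard_empty G
    · right
      have hTA : T = A i := by
        apply Set.Subset.antisymm (fun a ha => ha.1)
        intro a ha
        refine ⟨ha, ?_⟩
        have hgen : a - a₀ ∈ idg (A i) :=
          AddSubgroup.subset_closure ⟨a, ha, a₀, ha₀.1, rfl⟩
        have := hcos i (a₀ - δ) ha₀.2 (a - a₀) hgen
        have heq : a₀ - δ + (a - a₀) = a - δ := by abel
        rwa [heq] at this
      rw [hTA]
end

section
/- Let {A_1,...,A_m} be a bimodal collection of disjoint subsets of an abelian group G, and suppose A_i is a full coset of its internal difference group H_i. Let A_i^1,...,A_i^r be a partition of A_i such that each A_i^j is a full coset of its own internal difference group H_i^j. Then the collection obtained by replacing A_i by A_i^1,...,A_i^r is again bimodal. -/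
variable {G : Type*} [AddCommGroup G] [Fintype G]

lemma mem_idg_of_mem {X : Set G} {x y : G} (hx : x ∈ X) (hy : y ∈ X) :
    x - y ∈ idg X :=
  AddSubgroup.subset_closure ⟨x, hx, y, hy, rfl⟩

lemma coset_sub_mem {X : Set G} (h : ∃ a : G, X = (a + ·) '' (idg X : Set G))
    {x δ : G} (hx : x ∈ X) (hδ : δ ∈ idg X) : x - δ ∈ X := by
  obtain ⟨a, ha⟩ := h
  rw [ha] at hx ⊢
  obtain ⟨h1, hh1, rfl⟩ := hx
  exact ⟨h1 - δ, sub_mem hh1 hδ, by show a + (h1 - δ) = a + h1 - δ; abel⟩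

lemma bimodalCount_eq {ι : Type*} (A : ι → Set G) (i : ι) (δ : G) :
    bimodalCount A i δ = {a : G | a ∈ A i ∧ ∃ j, j ≠ i ∧ a - δ ∈ A j}.ncard := by
  have hinj : Function.Injective (fun a : G => (a, a - δ)) := by
    intro a b h
    exact congrArg Prod.fst h
  have himg : {p : G × G | p.1 ∈ A i ∧ (∃ j, j ≠ i ∧ p.2 ∈ A j) ∧ p.1 - p.2 = δ}
      = (fun a : G => (a, a - δ)) '' {a : G | a ∈ A i ∧ ∃ j, j ≠ i ∧ a - δ ∈ A j} := by
    ext ⟨x, y⟩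
    simp only [Set.mem_setOf_eq, Set.mem_image, Prod.mk.injEq]
    constructor
    · rintro ⟨hx, hj, hxy⟩
      have hy : x - δ = y := by rw [← hxy]; abel
      exact ⟨x, ⟨hx, by rwa [hy]⟩, rfl, hy⟩
    · rintro ⟨a, ⟨ha, hj⟩, rfl, rfl⟩
      exact ⟨ha, hj, by abel⟩
  rw [bimodalCount, himg, Set.ncard_image_of_injective _ hinj]

/-- Subdividing a set of a bimodal collection which is a full coset of its
internal difference group into full cosets of the internal difference groups of the
pieces again yields a bimodal collection. -/
theorem bimodal_subdivision {m r : ℕ} (A : Fin m → Set G)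
    (hne : ∀ i, (A i).Nonempty)
    (hdisj : ∀ i j, i ≠ j → Disjoint (A i) (A j))
    (hbim : IsBimodal A) (i : Fin m)
    (hAi : ∃ a : G, A i = (a + ·) '' (idg (A i) : Set G))
    (P : Fin r → Set G)
    (hPne : ∀ t, (P t).Nonempty)
    (hPdisj : ∀ s t, s ≠ t → Disjoint (P s) (P t))
    (hPcover : (⋃ t, P t) = A i)
    (hPcoset : ∀ t, ∃ a : G, P t = (a + ·) '' (idg (P t) : Set G)) :
    IsBimodal (Sum.elim (fun j : {j : Fin m // j ≠ i} => A j.1) P) := by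
  have hsubPA : ∀ t, P t ⊆ A i := fun t => hPcover ▸ Set.subset_iUnion P t
  intro δ hδ k
  rw [bimodalCount_eq]
  cases k with
  | inl j =>
    have hset : {a : G | a ∈ Sum.elim (fun j : {j : Fin m // j ≠ i} => A j.1) P (Sum.inl j) ∧
        ∃ l, l ≠ Sum.inl j ∧ a - δ ∈ Sum.elim (fun j : {j : Fin m // j ≠ i} => A j.1) P l}
        = {a : G | a ∈ A j.1 ∧ ∃ j', j' ≠ j.1 ∧ a - δ ∈ A j'} := by
      ext a
      simp only [Set.mem_setOf_eq, Sum.elim_inl]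
      refine and_congr_right fun _ => ?_
      constructor
      · rintro ⟨l, hl, hal⟩
        cases l with
        | inl j' =>
          exact ⟨j'.1, fun h => hl (by rw [Subtype.ext h]), hal⟩
        | inr s =>
          exact ⟨i, Ne.symm j.2, hsubPA s hal⟩
      · rintro ⟨j', hj', haj'⟩
        by_cases hji : j' = i
        · subst hji
          rw [← hPcover] at haj'
          obtain ⟨s, hs⟩ := Set.mem_iUnion.mp haj'
          exact ⟨Sum.inr s, by simp, hs⟩
        · exact ⟨Sum.inl ⟨j', hji⟩, by simpa using fun h => hj' (congrArg Subtype.val h), haj'⟩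
    rw [hset, ← bimodalCount_eq]
    exact hbim δ hδ j.1
  | inr t =>
    set S1 : Set G := {a : G | a ∈ P t ∧ (a - δ ∈ A i ∧ a - δ ∉ P t)} with hS1def
    set S2 : Set G := {a : G | a ∈ P t ∧ ∃ j, j ≠ i ∧ a - δ ∈ A j} with hS2def
    have hS : {a : G | a ∈ Sum.elim (fun j : {j : Fin m // j ≠ i} => A j.1) P (Sum.inr t) ∧
        ∃ l, l ≠ Sum.inr t ∧ a - δ ∈ Sum.elim (fun j : {j : Fin m // j ≠ i} => A j.1) P l}
        = S1 ∪ S2 := by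
      ext a
      simp only [hS1def, hS2def, Set.mem_setOf_eq, Set.mem_union, Sum.elim_inr]
      constructor
      · rintro ⟨ha, l, hl, hal⟩
        cases l with
        | inl j' => exact Or.inr ⟨ha, j'.1, j'.2, hal⟩
        | inr s =>
          have hst : s ≠ t := fun h => hl (by rw [h])
          exact Or.inl ⟨ha, hsubPA s hal,
            fun hmem => Set.disjoint_left.mp (hPdisj s t hst) hal hmem⟩
      · rintro (⟨ha, hAmem, hnot⟩ | ⟨ha, j', hj', haj'⟩)
        · rw [← hPcover] at hAmem
          obtain ⟨s, hs⟩ := Set.mem_iUnion.mp hAmem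
          have hst : s ≠ t := fun h => hnot (h ▸ hs)
          exact ⟨ha, Sum.inr s, fun h => hst (Sum.inr.inj h), hs⟩
        · exact ⟨ha, Sum.inl ⟨j', hj'⟩, by simp, haj'⟩
    have hdisjS : Disjoint S1 S2 := by
      rw [Set.disjoint_left]
      rintro a ⟨_, hA, _⟩ ⟨_, j', hj', haj'⟩
      exact Set.disjoint_left.mp (hdisj i j' (Ne.symm hj')) hA haj'
    rw [hS, Set.ncard_union_eq hdisjS (Set.toFinite _) (Set.toFinite _)]
    by_cases hH : δ ∈ idg (A i)
    · have hS2 : S2 = ∅ := by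
        rw [Set.eq_empty_iff_forall_notMem]
        rintro a ⟨ha, j', hj', haj'⟩
        have hmem : a - δ ∈ A i := coset_sub_mem hAi (hsubPA t ha) hH
        exact Set.disjoint_left.mp (hdisj i j' (Ne.symm hj')) hmem haj'
      by_cases hK : δ ∈ idg (P t)
      · left
        have hS1 : S1 = ∅ := by
          rw [Set.eq_empty_iff_forall_notMem]
          rintro a ⟨ha, _, hnot⟩
          exact hnot (coset_sub_mem (hPcoset t) ha hK)
        simp [hS1, hS2]
      · right
        have hS1 : S1 = P t := by
          ext a
          constructor
          · rintro ⟨ha, _⟩; exact ha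
          · intro ha
            refine ⟨ha, coset_sub_mem hAi (hsubPA t ha) hH, fun hmem => hK ?_⟩
            have h' : a - (a - δ) ∈ idg (P t) := mem_idg_of_mem ha hmem
            simpa using h'
        simp [hS1, hS2]
    · have hS1 : S1 = ∅ := by
        rw [Set.eq_empty_iff_forall_notMem]
        rintro a ⟨ha, hA, _⟩
        have h' : a - (a - δ) ∈ idg (A i) := mem_idg_of_mem (hsubPA t ha) hA
        simp only [sub_sub_cancel] at h'
        exact hH h'
      rcases hbim δ hδ i with h0 | hfull
      · left
        rw [bimodalCount_eq] at h0
        have hT : {a : G | a ∈ A i ∧ ∃ j, j ≠ i ∧ a - δ ∈ A j} = ∅ :=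
          (Set.ncard_eq_zero (Set.toFinite _)).mp h0
        have hS2 : S2 = ∅ := by
          rw [Set.eq_empty_iff_forall_notMem]
          rintro a ⟨ha, hj⟩
          have hmem : a ∈ {a : G | a ∈ A i ∧ ∃ j, j ≠ i ∧ a - δ ∈ A j} :=
            ⟨hsubPA t ha, hj⟩
          rw [hT] at hmem
          exact hmem
        simp [hS1, hS2]
      · right
        rw [bimodalCount_eq] at hfull
        have hT : {a : G | a ∈ A i ∧ ∃ j, j ≠ i ∧ a - δ ∈ A j} = A i :=
          Set.eq_of_subset_of_ncard_le (fun a ha => ha.1) hfull.ge (Set.toFinite _)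
        have hS2 : S2 = P t := by
          ext a
          constructor
          · rintro ⟨ha, _⟩; exact ha
          · intro ha
            have h' : a ∈ {a : G | a ∈ A i ∧ ∃ j, j ≠ i ∧ a - δ ∈ A j} :=
              hT.symm ▸ hsubPA t ha
            exact ⟨ha, h'.2⟩
        simp [hS1, hS2]
end

section
/- Let {A_1,...,A_m} be a bimodal collection of disjoint subsets of an abelian group G. For each j let H_j be the internal difference group of A_j and let a_j ∈ A_j. Then for any k ≠ j, A_k is disjoint from the coset a_j + H_j. -/
/-!
Bimodality says that a nonzero difference `δ` leading from one element of `A i` into the union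
`B i` of the other sets leads there from every element of `A i`. Starting from `y ∈ A i` and
`c ∈ B i`, the difference `y - c` therefore also leads from any `x ∈ A i` into `B i`, i.e.
`(x - y) + c ∈ B i`: the set `B i` is invariant under translation by the differences of `A i`,
hence by the group `H i` they generate. As `a ∉ B i` for `a ∈ A i`, the coset `a + H i` misses
`B i`, which contains every `A k` with `k ≠ i`.
-/

variable {G : Type*} [AddCommGroup G] [Fintype G]

open Function Pointwise

section

variable {α ι : Type*} {A : ι → Set α} {i : ι}

def unionOthers (A : ι → Set α) (i : ι) : Set α :=
  {g | ∃ j ≠ i, g ∈ A j}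

theorem disjoint_unionOthers (hdisj : Pairwise (Disjoint on A)) (i : ι) :
    Disjoint (A i) (unionOthers A i) := by
  rw [Set.disjoint_left]
  rintro g hgi ⟨j, hji, hgj⟩
  exact Set.disjoint_left.1 (hdisj hji) hgj hgi

variable [AddCommGroup α]

theorem bimodalCount_eq_ncard (A : ι → Set α) (i : ι) (δ : α) :
    bimodalCount A i δ = {x ∈ A i | x - δ ∈ unionOthers A i}.ncard := by
  have hpairs : {p : α × α | p.1 ∈ A i ∧ (∃ j, j ≠ i ∧ p.2 ∈ A j) ∧ p.1 - p.2 = δ}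
      = (fun x => (x, x - δ)) '' {x ∈ A i | x - δ ∈ unionOthers A i} := by
    ext ⟨x, y⟩
    simp only [Set.mem_ofPred_eq, Set.mem_image, Prod.mk.injEq, unionOthers]
    constructor
    · rintro ⟨hx, hy, rfl⟩
      exact ⟨x, ⟨hx, by rwa [sub_sub_cancel]⟩, rfl, sub_sub_cancel x y⟩
    · rintro ⟨x, ⟨hx, hxδ⟩, rfl, rfl⟩
      exact ⟨hx, hxδ, sub_sub_cancel x δ⟩
  rw [bimodalCount, hpairs, Set.ncard_image_of_injective _ fun x y hxy => (Prod.ext_iff.1 hxy).1]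

theorem IsBimodal.sub_mem_unionOthers (hbim : IsBimodal A) (hfin : (A i).Finite) {δ x₀ x : α}
    (hδ : δ ≠ 0) (hx₀ : x₀ ∈ A i) (hx₀δ : x₀ - δ ∈ unionOthers A i) (hx : x ∈ A i) :
    x - δ ∈ unionOthers A i := by
  set T := {x ∈ A i | x - δ ∈ unionOthers A i}
  have hTA : T ⊆ A i := fun _ hy => hy.1
  have hT : T.ncard ≠ 0 :=
    (Set.ncard_pos (hfin.subset hTA)).2 ⟨x₀, hx₀, hx₀δ⟩ |>.ne'
  have hcard : T.ncard = (A i).ncard := by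
    rw [← bimodalCount_eq_ncard]
    exact (hbim δ hδ i).resolve_left (by rwa [bimodalCount_eq_ncard])
  have hTeq : T = A i := Set.eq_of_subset_of_ncard_le hTA hcard.ge hfin
  exact (hTeq ▸ hx : x ∈ T).2

theorem IsBimodal.sub_add_mem_unionOthers (hbim : IsBimodal A) (hfin : (A i).Finite)
    (hdisj : Disjoint (A i) (unionOthers A i)) {x y c : α} (hx : x ∈ A i) (hy : y ∈ A i)
    (hc : c ∈ unionOthers A i) : x - y + c ∈ unionOthers A i := by
  have hδ : y - c ≠ 0 := sub_ne_zero.2 fun hyc => Set.disjoint_left.1 hdisj hy (hyc ▸ hc)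
  have := hbim.sub_mem_unionOthers hfin hδ hy (by rwa [sub_sub_cancel]) hx
  rwa [sub_sub_eq_add_sub, add_sub_right_comm] at this

/-- That is, `unionOthers A i` (the paper's `B i`) is a union of cosets of `idg (A i)`. -/
theorem IsBimodal.idg_le_stabilizer_unionOthers (hbim : IsBimodal A)
    (hfin : (A i).Finite) (hdisj : Disjoint (A i) (unionOthers A i)) :
    idg (A i) ≤ AddAction.stabilizer α (unionOthers A i) := by
  rw [idg, AddSubgroup.closure_le]
  rintro _ ⟨x, hx, y, hy, rfl⟩
  rw [SetLike.mem_coe, AddAction.mem_stabilizer_iff]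
  refine Set.Subset.antisymm ?_ fun c hc => Set.mem_vadd_set_iff_neg_vadd_mem.2 ?_
  · rintro _ ⟨c, hc, rfl⟩
    exact hbim.sub_add_mem_unionOthers hfin hdisj hx hy hc
  · rw [vadd_eq_add, neg_sub]
    exact hbim.sub_add_mem_unionOthers hfin hdisj hy hx hc

end

theorem bimodal_disjoint_coset_general {m : ℕ} (A : Fin m → Set G)
    (hdisj : ∀ i j, i ≠ j → Disjoint (A i) (A j))
    (hbim : IsBimodal A)
    (j k : Fin m) (hkj : k ≠ j) (a : G) (ha : a ∈ A j) :
    Disjoint (A k) ((a + ·) '' (idg (A j) : Set G)) := by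
  have hdisj_j := disjoint_unionOthers hdisj j
  have hstab := hbim.idg_le_stabilizer_unionOthers (Set.toFinite _) hdisj_j
  rw [Set.disjoint_left]
  rintro _ hk ⟨h, hh, rfl⟩
  have hmem : a + h ∈ h +ᵥ unionOthers A j := by
    rw [AddAction.mem_stabilizer_iff.1 (hstab hh)]
    exact ⟨k, hkj, hk⟩
  obtain ⟨b, hb, hab : h + b = a + h⟩ := hmem
  rw [add_comm h, add_left_inj] at hab
  exact Set.disjoint_left.1 hdisj_j ha (hab ▸ hb)

/-- In a bimodal collection, `A k` is disjoint from the whole coset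
`a j + H j` whenever `k ≠ j`. -/
theorem bimodal_disjoint_coset {m : ℕ} (A : Fin m → Set G)
    (hne : ∀ i, (A i).Nonempty)
    (hdisj : ∀ i j, i ≠ j → Disjoint (A i) (A j))
    (hbim : IsBimodal A)
    (j k : Fin m) (hkj : k ≠ j) (a : G) (ha : a ∈ A j) :
    Disjoint (A k) ((a + ·) '' (idg (A j) : Set G)) :=
  bimodal_disjoint_coset_general A hdisj hbim j k hkj a ha
end

section
/- Let {A_1,...,A_m} be a bimodal collection of disjoint subsets of an abelian group G, with internal difference groups H_1,...,H_m. Suppose i ≠ j are indices with |A_i| < |H_i| and |A_j| < |H_j|. Then H_i is not contained in H_j. -/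
variable {G : Type*} [AddCommGroup G] [Fintype G]

/-- The union of all the `A k` with `k ≠ i`. -/
def bset {ι : Type*} (A : ι → Set G) (i : ι) : Set G := {g | ∃ k, k ≠ i ∧ g ∈ A k}

lemma core {m : ℕ} (A : Fin m → Set G)
    (hdisj : ∀ i j, i ≠ j → Disjoint (A i) (A j)) (hbim : IsBimodal A)
    (i : Fin m) {x y b : G} (hx : x ∈ A i) (hy : y ∈ A i)
    (hb : b ∈ bset A i) : b + (x - y) ∈ bset A i := by
  obtain ⟨k, hk, hbk⟩ := hb
  have hyb : y ≠ b := fun h =>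
    Set.disjoint_left.mp (hdisj i k (Ne.symm hk)) hy (h ▸ hbk)
  have hδ : y - b ≠ 0 := sub_ne_zero.mpr hyb
  set δ := y - b with hδdef
  set S : Set G := {a | a ∈ A i ∧ ∃ k, k ≠ i ∧ a - δ ∈ A k} with hS
  have himg : (fun a => (a, a - δ)) '' S =
      {p : G × G | p.1 ∈ A i ∧ (∃ j, j ≠ i ∧ p.2 ∈ A j) ∧ p.1 - p.2 = δ} := by
    ext p
    constructor
    · rintro ⟨a, ⟨ha, k', hk', hk2⟩, rfl⟩
      exact ⟨ha, ⟨k', hk', hk2⟩, sub_sub_cancel a δ⟩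
    · rintro ⟨h1, h2, h3⟩
      have hp2 : p.2 = p.1 - δ := by rw [← h3]; abel
      refine ⟨p.1, ⟨h1, by rw [← hp2]; exact h2⟩, ?_⟩
      show (p.1, p.1 - δ) = p
      rw [← hp2]
  have hinj : Function.Injective (fun a : G => (a, a - δ)) :=
    fun a b hab => congrArg Prod.fst hab
  have hcard : bimodalCount A i δ = S.ncard := by
    rw [bimodalCount, ← himg, Set.ncard_image_of_injective _ hinj]
  have hmem : y ∈ S := ⟨hy, k, hk, by simpa [hδdef] using hbk⟩
  have hNne : bimodalCount A i δ ≠ 0 := by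
    rw [hcard]
    intro h0
    rw [Set.ncard_eq_zero S.toFinite] at h0
    exact absurd (h0 ▸ hmem) (Set.notMem_empty y)
  have hN : bimodalCount A i δ = (A i).ncard := (hbim δ hδ i).resolve_left hNne
  have hSsub : S ⊆ A i := fun a ha => ha.1
  have hSeq : S = A i := by
    apply Set.eq_of_subset_of_ncard_le hSsub _ (A i).toFinite
    rw [← hcard, hN]
  have hxS : x ∈ S := hSeq ▸ hx
  obtain ⟨_, k', hk', hxk'⟩ := hxS
  refine ⟨k', hk', ?_⟩
  have : b + (x - y) = x - δ := by rw [hδdef]; abel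
  rw [this]; exact hxk'

/-- The stabilizer of a set, as an additive subgroup. -/
def stab (B : Set G) : AddSubgroup G where
  carrier := {d | ∀ b, b ∈ B ↔ b + d ∈ B}
  zero_mem' := by simp
  add_mem' := by
    intro d e hd he b
    rw [hd b, he (b + d), add_assoc]
  neg_mem' := by
    intro d hd b
    have := (hd (b + -d)).symm
    simpa using this

lemma idg_le_stab {m : ℕ} (A : Fin m → Set G)
    (hdisj : ∀ i j, i ≠ j → Disjoint (A i) (A j)) (hbim : IsBimodal A)
    (i : Fin m) : idg (A i) ≤ stab (bset A i) := by
  rw [idg, AddSubgroup.closure_le]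
  rintro d ⟨x, hx, y, hy, rfl⟩
  intro b
  constructor
  · exact fun hb => core A hdisj hbim i hx hy hb
  · intro hb
    have h2 := core A hdisj hbim i hy hx hb
    have h3 : b + (x - y) + (y - x) = b := by abel
    rwa [h3] at h2

/-- If `A i` and `A j` (`i ≠ j`) both fail to fill a coset of their
internal difference groups, then `H i` is not contained in `H j`. -/
theorem bimodal_not_subgroup {m : ℕ} (A : Fin m → Set G)
    (hne : ∀ i, (A i).Nonempty)
    (hdisj : ∀ i j, i ≠ j → Disjoint (A i) (A j))
    (hbim : IsBimodal A)
    (i j : Fin m) (hij : i ≠ j)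
    (hi : (A i).ncard < Nat.card (idg (A i)))
    (hj : (A j).ncard < Nat.card (idg (A j))) :
    ¬ idg (A i) ≤ idg (A j) := by
  intro hle
  obtain ⟨a, ha⟩ := hne i
  set H := idg (A i) with hH
  have hgen : ∀ x ∈ A i, x - a ∈ H :=
    fun x hx => AddSubgroup.subset_closure ⟨x, hx, a, ha, rfl⟩
  have hsub : A i ⊆ (a + ·) '' (H : Set G) :=
    fun x hx => ⟨x - a, hgen x hx, by simp⟩
  have hcard : ((a + ·) '' (H : Set G)).ncard = Nat.card H := by
    rw [Set.ncard_image_of_injective _ (add_right_injective a),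
      ← SetLike.coe_sort_coe, ← Nat.card_coe_set_eq]
  have hlt : (A i).ncard < ((a + ·) '' (H : Set G)).ncard := by rw [hcard]; exact hi
  have hnsub : ¬ ((a + ·) '' (H : Set G)) ⊆ A i := fun h =>
    absurd (Set.ncard_le_ncard h (A i).toFinite) (not_le.mpr hlt)
  obtain ⟨c, hcC, hcA⟩ := Set.not_subset.mp hnsub
  obtain ⟨h, hhH, rfl⟩ := hcC
  have haBj : a ∈ bset A j := ⟨i, hij, ha⟩
  have hcBj : a + h ∈ bset A j :=
    ((idg_le_stab A hdisj hbim j (hle hhH)) a).mp haBj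
  obtain ⟨k, hkj, hck⟩ := hcBj
  have hki : k ≠ i := fun h' => hcA (h' ▸ hck)
  have hcBi : a + h ∈ bset A i := ⟨k, hki, hck⟩
  have haBi : a ∈ bset A i := by
    have := ((idg_le_stab A hdisj hbim i (neg_mem hhH)) (a + h)).mp hcBi
    simpa using this
  obtain ⟨k', hk', hak'⟩ := haBi
  exact Set.disjoint_left.mp (hdisj i k' (Ne.symm hk')) ha hak'
end

section
/- Let {A_1,...,A_m} be a bimodal collection of disjoint subsets of an abelian group G in canonical position with r ≥ 2, meaning: the internal difference groups satisfy A_i = H_i \ D for 1 ≤ i ≤ r where D = ⋂_{i≤r} H_i is a subgroup, and |A_i| = |H_i| for i > r. Then for every i > r, the internal difference group H_i of A_i is a subgroup of D. -/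
variable {G : Type*} [AddCommGroup G] [Fintype G]

lemma inter_nonempty_of_big {s t u : Set G} (hs : s ⊆ u) (ht : t ⊆ u)
    (h : u.ncard < s.ncard + t.ncard) : (s ∩ t).Nonempty := by
  have h1 := Set.ncard_union_add_ncard_inter s t (Set.toFinite _) (Set.toFinite _)
  have h2 : (s ∪ t).ncard ≤ u.ncard :=
    Set.ncard_le_ncard (Set.union_subset hs ht) (Set.toFinite _)
  exact Set.nonempty_of_ncard_ne_zero (by omega)

/-- Key counting step: if the bimodal count for `δ` is nonzero it equals `|A t|`, so
every element of `A t` shifts by `δ` into the union of the other sets. -/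
lemma stepB {m : ℕ} {A : Fin m → Set G}
    (hdisj : ∀ i j, i ≠ j → Disjoint (A i) (A j)) (hbim : IsBimodal A)
    {t j : Fin m} (hjt : j ≠ t) {b : G} (hb : b ∈ A j)
    {η x y : G} (hx : x ∈ A t) (hy : y ∈ A t) (hxy : x - y = η) :
    ∃ j', j' ≠ t ∧ b + η ∈ A j' := by
  obtain ⟨δ, hδdef⟩ : ∃ δ : G, δ = y - b := ⟨_, rfl⟩
  have hδ : δ ≠ 0 := by
    rw [hδdef]
    intro h0
    have hyb : y = b := sub_eq_zero.mp h0
    exact Set.disjoint_left.mp (hdisj t j (Ne.symm hjt)) hy (hyb ▸ hb)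
  set S : Set (G × G) := {p : G × G | p.1 ∈ A t ∧ (∃ j, j ≠ t ∧ p.2 ∈ A j) ∧ p.1 - p.2 = δ}
    with hSdef
  set T : Set G := {a | a ∈ A t ∧ ∃ j', j' ≠ t ∧ a - δ ∈ A j'} with hTdef
  have hST : S = (fun a => (a, a - δ)) '' T := by
    ext p
    constructor
    · rintro ⟨hp1, ⟨j', hj', hp2⟩, hp3⟩
      have h2 : p.2 = p.1 - δ := by rw [← hp3]; abel
      exact ⟨p.1, ⟨hp1, j', hj', h2 ▸ hp2⟩, Prod.ext rfl h2.symm⟩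
    · rintro ⟨a, ⟨ha, j', hj', haj⟩, rfl⟩
      exact ⟨ha, ⟨j', hj', haj⟩, sub_sub_cancel a δ⟩
  have hinj : Function.Injective (fun a : G => (a, a - δ)) := fun a b h => congrArg Prod.fst h
  have hScard : S.ncard = T.ncard := by rw [hST, Set.ncard_image_of_injective _ hinj]
  have hSne : S.Nonempty := ⟨(y, b), hy, ⟨j, hjt, hb⟩, hδdef.symm⟩
  have hbc : bimodalCount A t δ = S.ncard := rfl
  have hcount : S.ncard = (A t).ncard := by
    rcases hbim δ hδ t with h0 | h
    · exfalso
      rw [hbc, Set.ncard_eq_zero (Set.toFinite _)] at h0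
      exact hSne.ne_empty h0
    · rw [← hbc]; exact h
  have hTA : T = A t := by
    refine Set.eq_of_subset_of_ncard_le (fun a ha => ha.1) ?_ (Set.toFinite _)
    omega
  have hxT : x ∈ T := hTA ▸ hx
  obtain ⟨-, j', hj', hxδ⟩ := hxT
  refine ⟨j', hj', ?_⟩
  have : x - δ = b + η := by rw [hδdef, ← hxy]; abel
  exact this ▸ hxδ

/-- A set whose cardinality equals that of its internal difference group is a full coset. -/
lemma full_eq_image {X : Set G} (hfull : X.ncard = Nat.card (idg X))
    {a : G} (ha : a ∈ X) : X = (a + ·) '' (idg X : Set G) := by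
  have hsub : X ⊆ (a + ·) '' (idg X : Set G) := by
    intro x hx
    exact ⟨x - a, mem_idg_of_mem hx ha, by simp⟩
  refine Set.eq_of_subset_of_ncard_le hsub (le_of_eq ?_) (Set.toFinite _)
  rw [Set.ncard_image_of_injective _ (add_right_injective a), hfull,
    ← Nat.card_coe_set_eq, SetLike.coe_sort_coe]

/-- Every element of `idg X` is a difference of two elements of `X`,
when `X = H \ D` for `H = idg X` and a subgroup `D ≤ H`. -/
lemma deficient_diff {X : Set G} {D : AddSubgroup G} (hne : X.Nonempty)
    (hDH : D ≤ idg X) (hX : X = (idg X : Set G) \ (D : Set G)) :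
    ∀ η ∈ idg X, ∃ x ∈ X, ∃ y ∈ X, x - y = η := by
  set H := idg X with hH
  have hDsub : (D : Set G) ⊆ (H : Set G) := hDH
  have hXH : X ⊆ (H : Set G) := by rw [hX]; exact Set.diff_subset
  have hcardX : X.ncard = (H : Set G).ncard - (D : Set G).ncard := by
    rw [hX]; exact Set.ncard_diff hDsub (Set.toFinite _)
  have hDle : (D : Set G).ncard ≤ (H : Set G).ncard :=
    Set.ncard_le_ncard hDsub (Set.toFinite _)
  have hcosub : ∀ x ∈ X, (x + ·) '' (D : Set G) ⊆ X := by
    intro x hx d hd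
    obtain ⟨d', hd', rfl⟩ := hd
    rw [hX]
    refine ⟨AddSubgroup.add_mem _ (hXH hx) (hDH hd'), fun hmem => ?_⟩
    have : x ∈ (D : Set G) := by
      have := AddSubgroup.sub_mem D hmem hd'
      simpa using this
    rw [hX] at hx; exact hx.2 this
  obtain ⟨x0, hx0⟩ := hne
  have hDX : (D : Set G).ncard ≤ X.ncard := by
    have := Set.ncard_le_ncard (hcosub x0 hx0) (Set.toFinite _)
    rwa [Set.ncard_image_of_injective _ (add_right_injective x0)] at this
  -- exclude |H| = 2|D|
  have hkey : 2 * (D : Set G).ncard < (H : Set G).ncard := by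
    rcases lt_or_ge (2 * (D : Set G).ncard) ((H : Set G).ncard) with h | h
    · exact h
    · exfalso
      have h2 : (H : Set G).ncard = 2 * (D : Set G).ncard := by omega
      -- each translate x + D equals X
      have hco : ∀ x ∈ X, (x + ·) '' (D : Set G) = X := by
        intro x hx
        refine Set.eq_of_subset_of_ncard_le (hcosub x hx) (le_of_eq ?_) (Set.toFinite _)
        rw [Set.ncard_image_of_injective _ (add_right_injective x)]
        omega
      -- so all differences lie in D
      have hgen : {d : G | ∃ x ∈ X, ∃ y ∈ X, x - y = d} ⊆ (D : Set G) := by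
        rintro d ⟨x, hx, y, hy, rfl⟩
        have : x ∈ (y + ·) '' (D : Set G) := (hco y hy).symm ▸ hx
        obtain ⟨d', hd', hx'⟩ := this
        have hx'' : y + d' = x := hx'
        have : x - y = d' := by rw [← hx'']; abel
        rw [this]; exact hd'
      have hHD : H ≤ D := (AddSubgroup.closure_le D).mpr hgen
      rw [hX] at hx0
      exact hx0.2 (hHD hx0.1)
  intro η hη
  have htsub : (η + ·) '' X ⊆ (H : Set G) := by
    rintro z ⟨x, hx, rfl⟩
    exact AddSubgroup.add_mem _ hη (hXH hx)
  have hints : (X ∩ (η + ·) '' X).Nonempty := by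
    refine inter_nonempty_of_big hXH htsub ?_
    rw [Set.ncard_image_of_injective _ (add_right_injective η)]
    omega
  obtain ⟨z, hzX, y, hyX, hzy⟩ := hints
  have hzy' : η + y = z := hzy
  exact ⟨z, hzX, y, hyX, by rw [← hzy']; abel⟩

/-- canonical position, `r ≥ 2`: for every `i` beyond `r` the internal
difference group `H i` is a subgroup of the kernel `D`. -/
theorem bimodal_tail_idg_le_kernel {m r : ℕ} (A : Fin m → Set G)
    (hne : ∀ i, (A i).Nonempty)
    (hdisj : ∀ i j, i ≠ j → Disjoint (A i) (A j))
    (hbim : IsBimodal A)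
    (hr : 2 ≤ r)
    (hlt : ∀ i : Fin m, (i : ℕ) < r ↔ (A i).ncard < Nat.card (idg (A i)))
    (hfull : ∀ i : Fin m, r ≤ (i : ℕ) → (A i).ncard = Nat.card (idg (A i)))
    (D : AddSubgroup G)
    (hD : D = ⨅ i : {i : Fin m // (i : ℕ) < r}, idg (A i.1))
    (hcanon : ∀ i : Fin m, (i : ℕ) < r → A i = (idg (A i) : Set G) \ (D : Set G)) :
    ∀ i : Fin m, r ≤ (i : ℕ) → idg (A i) ≤ D := by
  have hDle : ∀ k : Fin m, (k : ℕ) < r → D ≤ idg (A k) := by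
    intro k hk x hx
    rw [hD] at hx
    exact AddSubgroup.mem_iInf.mp hx ⟨k, hk⟩
  have hdiffk : ∀ k : Fin m, (k : ℕ) < r →
      ∀ η ∈ idg (A k), ∃ x ∈ A k, ∃ y ∈ A k, x - y = η :=
    fun k hk => deficient_diff (hne k) (hDle k hk) (hcanon k hk)
  have hAkH : ∀ k : Fin m, (k : ℕ) < r → A k ⊆ (idg (A k) : Set G) := by
    intro k hk x hx
    rw [hcanon k hk] at hx
    exact hx.1
  have hfullim : ∀ j : Fin m, r ≤ (j : ℕ) → ∀ a ∈ A j, ∀ η ∈ idg (A j), a + η ∈ A j := by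
    intro j hj a ha η hη
    rw [full_eq_image (hfull j hj) ha]
    exact ⟨η, hη, rfl⟩
  have hfulldiff : ∀ j : Fin m, r ≤ (j : ℕ) →
      ∀ η ∈ idg (A j), ∃ x ∈ A j, ∃ y ∈ A j, x - y = η := by
    intro j hj η hη
    obtain ⟨a, ha⟩ := hne j
    exact ⟨a + η, hfullim j hj a ha η hη, a, ha, by abel⟩
  -- no element of a full set lies in `H j + H k` for deficient `k`
  have hnov : ∀ j : Fin m, r ≤ (j : ℕ) → ∀ k : Fin m, (k : ℕ) < r →
      ∀ z ∈ A j, ∀ ηj ∈ idg (A j), ∀ ηk ∈ idg (A k), z ≠ ηj + ηk := by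
    intro j hj k hk z hz ηj hηj ηk hηk heq
    obtain ⟨x0, hx0⟩ := hne k
    have ha : z + -ηj ∈ A j := hfullim j hj z hz (-ηj) (neg_mem hηj)
    have hval : z + -ηj = ηk := by rw [heq]; abel
    have hjk : j ≠ k := by intro e; rw [e] at hj; omega
    have hη' : x0 - ηk ∈ idg (A k) := AddSubgroup.sub_mem _ (hAkH k hk hx0) hηk
    obtain ⟨x3, hx3, y3, hy3, hxy3⟩ := hdiffk k hk _ hη'
    obtain ⟨j', hj'k, hj'⟩ := stepB hdisj hbim hjk ha hx3 hy3 hxy3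
    rw [hval, show ηk + (x0 - ηk) = x0 by abel] at hj'
    exact Set.disjoint_left.mp (hdisj j' k hj'k) hj' hx0
  have hzero : ∀ k : Fin m, (k : ℕ) < r → ∀ j, (0 : G) ∉ A j := by
    intro k hk j h0
    rcases lt_or_ge (j : ℕ) r with hj | hj
    · rw [hcanon j hj] at h0; exact h0.2 D.zero_mem
    · exact hnov j hj k hk 0 h0 0 (zero_mem _) 0 (zero_mem _) (by simp)
  intro i hi h hh
  rw [hD, AddSubgroup.mem_iInf]
  rintro ⟨k, hk⟩
  by_contra hhk
  have hki : k ≠ i := by intro e; rw [e] at hk; omega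
  obtain ⟨x0, hx0⟩ := hne k
  -- step 1: x0 + h lands in some A j2, j2 ≠ i
  obtain ⟨x, hx, y, hy, hxy⟩ := hfulldiff i hi h hh
  obtain ⟨j2, hj2i, hj2⟩ := stepB hdisj hbim hki hx0 hx hy hxy
  -- step 2: j2 ≠ k
  have hj2k : j2 ≠ k := by
    rintro rfl
    exact hhk (by simpa using mem_idg_of_mem hj2 hx0)
  -- step 3: h itself lies in some A j3, j3 ≠ k
  have hnx0 : -x0 ∈ idg (A k) := neg_mem (hAkH k hk hx0)
  obtain ⟨x1, hx1, y1, hy1, hxy1⟩ := hdiffk k hk _ hnx0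
  obtain ⟨j3, hj3k, hj3⟩ := stepB hdisj hbim hj2k hj2 hx1 hy1 hxy1
  rw [show x0 + h + -x0 = h by abel] at hj3
  -- step 4: j3 ≠ i
  have hj3i : j3 ≠ i := by
    rintro rfl
    exact hnov j3 hi k hk h hj3 h hh 0 (zero_mem _) (by simp)
  -- step 5: 0 ∈ A j4, contradiction
  obtain ⟨x2, hx2, y2, hy2, hxy2⟩ := hfulldiff i hi (-h) (neg_mem hh)
  obtain ⟨j4, hj4i, hj4⟩ := stepB hdisj hbim hj3i hj3 hx2 hy2 hxy2
  rw [add_neg_cancel] at hj4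
  exact hzero k hk j4 hj4
end

section
/- Let {A_1,...,A_m} be a bimodal collection of disjoint subsets of an abelian group G in canonical position with r ≥ 2 (A_i = H_i \ D for i ≤ r, D = ⋂_{i≤r} H_i a subgroup, |A_i| = |H_i| for i > r). Let H = H_1 + ... + H_r and A = ⋃_{i=1}^m A_i. If x ∈ A \ H, then x + h ∈ A for every h ∈ H; that is, A \ H is a union of cosets of H. -/
variable {G : Type*} [AddCommGroup G] [Fintype G]

/-- canonical position, `r ≥ 2`: the part of `A = ⋃ A i` outside
`H = H 1 + ... + H r` is a union of cosets of `H`. -/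
theorem bimodal_outside_union_of_cosets {m r : ℕ} (A : Fin m → Set G)
    (hne : ∀ i, (A i).Nonempty)
    (hdisj : ∀ i j, i ≠ j → Disjoint (A i) (A j))
    (hbim : IsBimodal A)
    (hr : 2 ≤ r)
    (hlt : ∀ i : Fin m, (i : ℕ) < r ↔ (A i).ncard < Nat.card (idg (A i)))
    (hfull : ∀ i : Fin m, r ≤ (i : ℕ) → (A i).ncard = Nat.card (idg (A i)))
    (D : AddSubgroup G)
    (hD : D = ⨅ i : {i : Fin m // (i : ℕ) < r}, idg (A i.1))
    (hcanon : ∀ i : Fin m, (i : ℕ) < r → A i = (idg (A i) : Set G) \ (D : Set G))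
    (H : AddSubgroup G)
    (hH : H = ⨆ i : {i : Fin m // (i : ℕ) < r}, idg (A i.1)) :
    ∀ x ∈ (⋃ i, A i) \ (H : Set G), ∀ h ∈ H, x + h ∈ ⋃ i, A i := by
  have hidgle : ∀ i : Fin m, (i : ℕ) < r → idg (A i) ≤ H := fun i hi =>
    hH ▸ le_iSup (fun j : {i : Fin m // (i : ℕ) < r} => idg (A j.1)) ⟨i, hi⟩
  have hsub : ∀ i : Fin m, (i : ℕ) < r → A i ⊆ (H : Set G) := by
    intro i hi y hy
    have hy' := hy
    rw [hcanon i hi] at hy'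
    exact hidgle i hi hy'.1
  set S : Set G := (⋃ j, A j) \ (H : Set G) with hS
  have step : ∀ i : Fin m, (i : ℕ) < r → ∀ a ∈ A i, ∀ a' ∈ A i,
      ∀ y ∈ S, y + (a - a') ∈ ⋃ j, A j := by
    intro i hi a ha a' ha' y hy
    obtain ⟨hyA, hyH⟩ := hy
    obtain ⟨k, hyk⟩ := Set.mem_iUnion.mp hyA
    have hki : k ≠ i := by
      intro h; apply hyH; exact hsub i hi (h ▸ hyk)
    obtain ⟨δ, hδ⟩ : ∃ δ : G, δ = a' - y := ⟨_, rfl⟩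
    have hδ0 : δ ≠ 0 := by
      intro h0
      rw [hδ] at h0
      exact hyH (sub_eq_zero.mp h0 ▸ hsub i hi ha')
    set Q : Set G := {p | p ∈ A i ∧ ∃ j, j ≠ i ∧ p - δ ∈ A j} with hQ
    have hcount : bimodalCount A i δ = Q.ncard := by
      have himg : {p : G × G | p.1 ∈ A i ∧ (∃ j, j ≠ i ∧ p.2 ∈ A j) ∧ p.1 - p.2 = δ}
          = (fun p : G => (p, p - δ)) '' Q := by
        ext ⟨p1, p2⟩
        simp only [Set.mem_setOf_eq, Set.mem_image, Prod.mk.injEq]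
        constructor
        · rintro ⟨h1, h2, h3⟩
          have hp2 : p1 - δ = p2 := by rw [← h3, sub_sub_cancel]
          exact ⟨p1, ⟨h1, hp2 ▸ h2⟩, rfl, hp2⟩
        · rintro ⟨p, ⟨hp1, hp2⟩, e1, e2⟩
          subst e1
          exact ⟨hp1, e2 ▸ hp2, by rw [← e2, sub_sub_cancel]⟩
      rw [bimodalCount, himg]
      exact Set.ncard_image_of_injective _ (fun a b hab => congrArg Prod.fst hab)
    have ha'Q : a' ∈ Q := by
      refine ⟨ha', k, hki, ?_⟩
      rw [hδ, sub_sub_cancel]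
      exact hyk
    have hpos : bimodalCount A i δ ≠ 0 := by
      rw [hcount]
      exact (Set.ncard_pos (Set.toFinite Q)).mpr ⟨a', ha'Q⟩ |>.ne'
    have hQcard : Q.ncard = (A i).ncard := by
      rcases hbim δ hδ0 i with h | h
      · exact absurd h hpos
      · rw [← hcount]; exact h
    have hQeq : Q = A i := by
      refine Set.eq_of_subset_of_ncard_le (fun p hp => hp.1) ?_ (Set.toFinite _)
      rw [hQcard]
    have haQ : a ∈ Q := hQeq ▸ ha
    obtain ⟨_, j, hji, hj⟩ := haQ
    have : a - δ = y + (a - a') := by rw [hδ]; abel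
    rw [this] at hj
    exact Set.mem_iUnion.mpr ⟨j, hj⟩
  have stepS : ∀ i : Fin m, (i : ℕ) < r → ∀ a ∈ A i, ∀ a' ∈ A i,
      ∀ y ∈ S, y + (a - a') ∈ S := by
    intro i hi a ha a' ha' y hy
    refine ⟨step i hi a ha a' ha' y hy, ?_⟩
    intro hmem
    have hd : a - a' ∈ H := hidgle i hi (AddSubgroup.subset_closure ⟨a, ha, a', ha', rfl⟩)
    have : y ∈ H := by
      have := AddSubgroup.sub_mem H hmem hd
      simpa using this
    exact hy.2 this
  set C : AddSubgroup G :=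
  { carrier := {g | ∀ y ∈ S, y + g ∈ S}
    zero_mem' := by intro y hy; simpa using hy
    add_mem' := by
      intro g1 g2 h1 h2 y hy
      rw [← add_assoc]
      exact h2 _ (h1 y hy)
    neg_mem' := by
      intro g hg y hy
      have hmaps : Set.MapsTo (· + g) S S := fun z hz => hg z hz
      have hinj : Set.InjOn (· + g) S := fun a _ b _ hab => by simpa using hab
      have hbij := ((Set.toFinite S).injOn_iff_bijOn_of_mapsTo hmaps).mp hinj
      obtain ⟨z, hz, hzy⟩ := hbij.surjOn hy
      have hze : y + -g = z := by
        simp only at hzy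
        rw [← hzy]; abel
      rwa [hze] } with hC
  have hHC : H ≤ C := by
    rw [hH]
    refine iSup_le ?_
    rintro ⟨i, hi⟩
    show idg (A i) ≤ C
    rw [idg]
    refine (AddSubgroup.closure_le C).2 ?_
    rintro d ⟨a, ha, a', ha', rfl⟩
    exact fun y hy => stepS i hi a ha a' ha' y hy
  intro x hx h hh
  exact (hHC hh x hx).1
end

section
/- Let G be an abelian group and H_1,...,H_t (t ≥ 2) distinct subgroups forming a t-star with kernel D (i.e., H_i ∩ H_j = D for all i ≠ j) with index [H_i : D] > 2 for each i. Then for each i, the subgroup generated by all differences x - y with x, y ∈ H_i \ D equals H_i. -/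
variable {G : Type*} [AddCommGroup G] [Fintype G]

/-!
Since `H \ D` is symmetric, it suffices to write each `g ∈ H` as `z - (z - g)` with `z` and
`z - g` both outside `D`, i.e. to pick `z ∈ H` outside the two cosets `D` and `g + D`; this is
possible because `D ⊓ H` has more than two cosets in `H`. So the differences of `H \ D` already
exhaust `H`.
-/

open Pointwise

namespace AddSubgroup

variable {A : Type*} [AddCommGroup A] {D H : AddSubgroup A}

theorem exists_notMem_and_sub_notMem (hindex : 2 < D.relIndex H) (g : H) :
    ∃ z : H, (z : A) ∉ D ∧ (z : A) - g ∉ D := by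
  have hcard : 3 ≤ ENat.card (H ⧸ D.addSubgroupOf H) := by
    replace hindex : 2 < Nat.card (H ⧸ D.addSubgroupOf H) := hindex
    have := Nat.finite_of_card_ne_zero (α := H ⧸ D.addSubgroupOf H) (by omega)
    rw [ENat.card_eq_coe_natCard]
    exact_mod_cast hindex
  obtain ⟨q, hq0, hqg⟩ := ENat.exists_ne_ne_of_three_le hcard 0 (g : H ⧸ D.addSubgroupOf H)
  obtain ⟨z, rfl⟩ := QuotientAddGroup.mk_surjective q
  refine ⟨z, fun hz => hq0 ?_, fun hzg => hqg ?_⟩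
  · exact (QuotientAddGroup.eq_zero_iff z).2 hz
  · rw [← sub_eq_zero, ← QuotientAddGroup.mk_sub]
    exact (QuotientAddGroup.eq_zero_iff _).2 hzg

theorem diff_sub_diff_eq_of_two_lt_relIndex (hindex : 2 < D.relIndex H) :
    ((H : Set A) \ D) - ((H : Set A) \ D) = H := by
  refine subset_antisymm ?_ fun g hg => ?_
  · rintro _ ⟨x, hx, y, hy, rfl⟩
    exact H.sub_mem hx.1 hy.1
  · obtain ⟨z, hz, hzg⟩ := exists_notMem_and_sub_notMem hindex ⟨g, hg⟩
    exact ⟨z, ⟨z.2, hz⟩, z - g, ⟨H.sub_mem z.2 hg, hzg⟩, sub_sub_cancel _ _⟩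

end AddSubgroup

theorem star_idg_eq_general {t : ℕ} (H : Fin t → AddSubgroup G)
    (D : AddSubgroup G)
    (hindex : ∀ i, 2 < D.relIndex (H i)) :
    ∀ i, idg ((H i : Set G) \ (D : Set G)) = H i := fun i =>
  (congrArg AddSubgroup.closure (AddSubgroup.diff_sub_diff_eq_of_two_lt_relIndex (hindex i))).trans
    (AddSubgroup.closure_eq (H i))

/-- For a `t`-star of distinct subgroups with kernel `D` and
`[H i : D] > 2`, the internal difference group of `H i \ D` is `H i`. -/
theorem star_idg_eq {t : ℕ} (ht : 2 ≤ t) (H : Fin t → AddSubgroup G)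
    (hinj : Function.Injective H) (D : AddSubgroup G)
    (hstar : ∀ i j, i ≠ j → H i ⊓ H j = D)
    (hindex : ∀ i, 2 < D.relIndex (H i)) :
    ∀ i, idg ((H i : Set G) \ (D : Set G)) = H i :=
  star_idg_eq_general H D hindex
end

section
/- Let G be an abelian group, t ≥ 2, and H_1,...,H_t distinct subgroups forming a t-star with kernel D (pairwise intersections equal D) with [H_i : D] > 2 for each i. Let the collection A consist of: the sets A_i = H_i \ D for 1 ≤ i ≤ t, together with all cosets of D contained in H = H_1 + ... + H_t but not contained in ⋃_{i=1}^t H_i. Then A is a bimodal collection of subsets of G. -/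
/-
Each part `A` comes with a subgroup `K` containing its differences (`H i` for `A = H i \ D`, `D` for
a coset of `D`) such that the union `B` of the other parts is a union of cosets of `K`. Then `δ` is
an external difference out of `a ∈ A` exactly when `a - δ ∈ B`, and if this holds for one `a₀ ∈ A`
it holds for every `a ∈ A`, because `a - δ = (a₀ - δ) + (a - a₀)`. The parts partition `U \ D`,
where `U = H 1 + ... + H t`, since a coset of `D` meeting some `H j` lies inside it; so `B` is
`U \ H i`, respectively `U \ (D ∪ A)`, and both are unions of cosets of `K`.
-/

variable {G : Type*} [AddCommGroup G] [Fintype G]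

section

omit [Fintype G]

theorem setOf_exists_ne_mem_eq_iUnion_sdiff {α ι : Type*} {A : ι → Set α}
    (hA : Pairwise fun i j => Disjoint (A i) (A j)) (i : ι) :
    {x | ∃ j ≠ i, x ∈ A j} = (⋃ j, A j) \ A i := by
  ext x
  constructor
  · rintro ⟨j, hji, hx⟩
    exact ⟨Set.mem_iUnion_of_mem j hx, Set.disjoint_left.1 (hA hji) hx⟩
  · rintro ⟨hx, hxi⟩
    obtain ⟨j, hj⟩ := Set.mem_iUnion.1 hx
    exact ⟨j, fun h => hxi (h ▸ hj), hj⟩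

/-- `X` is a union of cosets of `K`. -/
def IsUnionOfCosets (K : AddSubgroup G) (X : Set G) : Prop :=
  ∀ x ∈ X, ∀ k ∈ K, x + k ∈ X

namespace IsUnionOfCosets

variable {K L : AddSubgroup G} {X Y : Set G}

theorem mono (hKL : K ≤ L) (hX : IsUnionOfCosets L X) : IsUnionOfCosets K X :=
  fun x hx k hk => hX x hx k (hKL hk)

theorem of_le (hKL : K ≤ L) : IsUnionOfCosets K L :=
  fun _ hx _ hk => L.add_mem hx (hKL hk)

theorem union (hX : IsUnionOfCosets K X) (hY : IsUnionOfCosets K Y) :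
    IsUnionOfCosets K (X ∪ Y) := by
  rintro x (hx | hx) k hk
  exacts [Or.inl (hX x hx k hk), Or.inr (hY x hx k hk)]

theorem sdiff (hX : IsUnionOfCosets K X) (hY : IsUnionOfCosets K Y) :
    IsUnionOfCosets K (X \ Y) := by
  rintro x ⟨hx, hxY⟩ k hk
  refine ⟨hX x hx k hk, fun h => hxY ?_⟩
  simpa using hY _ h (-k) (K.neg_mem hk)

end IsUnionOfCosets

theorem idg_le_of_sub_mem {X : Set G} {K : AddSubgroup G}
    (h : ∀ x ∈ X, ∀ y ∈ X, x - y ∈ K) : idg X ≤ K :=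
  (AddSubgroup.closure_le K).2 fun _ ⟨x, hx, y, hy, hxy⟩ => hxy ▸ h x hx y hy

theorem bimodalCount_eq_zero_or_eq_ncard {ι : Type*} {A : ι → Set G} {i : ι}
    (hB : IsUnionOfCosets (idg (A i)) {x | ∃ j ≠ i, x ∈ A j}) (δ : G) :
    bimodalCount A i δ = 0 ∨ bimodalCount A i δ = (A i).ncard := by
  set B := {x | ∃ j ≠ i, x ∈ A j}
  have hcount : bimodalCount A i δ = {a ∈ A i | a - δ ∈ B}.ncard := by
    have : {p : G × G | p.1 ∈ A i ∧ (∃ j ≠ i, p.2 ∈ A j) ∧ p.1 - p.2 = δ}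
        = (fun a => (a, a - δ)) '' {a ∈ A i | a - δ ∈ B} := by
      ext ⟨a, b⟩
      simp only [Set.mem_image, Prod.mk.injEq, B]
      constructor
      · rintro ⟨ha, hb, rfl⟩
        exact ⟨a, ⟨ha, by rwa [sub_sub_cancel]⟩, rfl, sub_sub_cancel a b⟩
      · rintro ⟨a, ⟨ha, hb⟩, rfl, rfl⟩
        exact ⟨ha, hb, sub_sub_cancel a δ⟩
    rw [bimodalCount, this, Set.ncard_image_of_injective _ fun _ _ h => congrArg Prod.fst h]
  rw [hcount]
  obtain hempty | ⟨a₀, ha₀, hB₀⟩ := Set.eq_empty_or_nonempty {a ∈ A i | a - δ ∈ B}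
  · exact Or.inl (by rw [hempty, Set.ncard_empty])
  · refine Or.inr (congrArg Set.ncard (Set.sep_eq_self_iff_mem_true.2 fun a ha => ?_))
    have hdiff : a - a₀ ∈ idg (A i) := AddSubgroup.subset_closure ⟨a, ha, a₀, ha₀, rfl⟩
    simpa using hB _ hB₀ _ hdiff

theorem isBimodal_of_isUnionOfCosets {ι : Type*} {A : ι → Set G}
    (h : ∀ i, IsUnionOfCosets (idg (A i)) {x | ∃ j ≠ i, x ∈ A j}) : IsBimodal A :=
  fun δ _ i => bimodalCount_eq_zero_or_eq_ncard (h i) δ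

theorem mem_image_add_left_iff {K : AddSubgroup G} {g x : G} :
    x ∈ (g + ·) '' (K : Set G) ↔ x - g ∈ K := by
  simp [Set.image_add_left, neg_add_eq_sub]

theorem image_add_left_eq_of_mem {K : AddSubgroup G} {g x : G}
    (hx : x ∈ (g + ·) '' (K : Set G)) : (g + ·) '' (K : Set G) = (x + ·) '' (K : Set G) := by
  rw [mem_image_add_left_iff] at hx
  ext y
  simp only [mem_image_add_left_iff]
  constructor
  · intro hy
    simpa using K.sub_mem hy hx
  · intro hy
    simpa using K.add_mem hy hx

variable {t : ℕ} {H : Fin t → AddSubgroup G} {D : AddSubgroup G}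

abbrev StarCoset (H : Fin t → AddSubgroup G) (D : AddSubgroup G) : Type _ :=
  {S : Set G // (∃ g : G, S = (g + ·) '' (D : Set G)) ∧
    S ⊆ ((⨆ i, H i : AddSubgroup G) : Set G) ∧ ¬ S ⊆ ⋃ i, (H i : Set G)}

def starCollection (H : Fin t → AddSubgroup G) (D : AddSubgroup G) :
    Fin t ⊕ StarCoset H D → Set G :=
  Sum.elim (fun i => (H i : Set G) \ (D : Set G)) (fun S => S.1)

namespace StarCoset

theorem eq_image_add_left (S : StarCoset H D) {x : G} (hx : x ∈ S.1) :
    S.1 = (x + ·) '' (D : Set G) := by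
  obtain ⟨⟨g, hg⟩, -⟩ := S.2
  rw [hg] at hx ⊢
  exact image_add_left_eq_of_mem hx

theorem isUnionOfCosets (S : StarCoset H D) : IsUnionOfCosets D S.1 := by
  intro x hx k hk
  rw [S.eq_image_add_left hx]
  exact ⟨k, hk, rfl⟩

theorem sub_mem (S : StarCoset H D) {x y : G} (hx : x ∈ S.1) (hy : y ∈ S.1) : x - y ∈ D := by
  rw [S.eq_image_add_left hy, mem_image_add_left_iff] at hx
  exact hx

theorem eq_of_mem {S S' : StarCoset H D} {x : G} (hx : x ∈ S.1) (hx' : x ∈ S'.1) : S = S' :=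
  Subtype.ext ((S.eq_image_add_left hx).trans (S'.eq_image_add_left hx').symm)

theorem notMem (hD : ∀ j, D ≤ H j) (S : StarCoset H D) {x : G} (hx : x ∈ S.1) (j : Fin t) :
    x ∉ H j := by
  intro hxj
  apply S.2.2.2
  rw [S.eq_image_add_left hx]
  rintro _ ⟨d, hd, rfl⟩
  exact Set.mem_iUnion_of_mem j ((H j).add_mem hxj (hD j hd))

theorem exists_mem (hD : D ≤ ⨆ i, H i) {x : G} (hx : x ∈ ⨆ i, H i) (hxH : ∀ j, x ∉ H j) :
    ∃ S : StarCoset H D, x ∈ S.1 := by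
  refine ⟨⟨(x + ·) '' (D : Set G), ⟨x, rfl⟩, ?_, ?_⟩, 0, D.zero_mem, add_zero x⟩
  · rintro _ ⟨d, hd, rfl⟩
    exact add_mem hx (hD hd)
  · intro hsub
    obtain ⟨j, hj⟩ := Set.mem_iUnion.1 (hsub ⟨0, D.zero_mem, add_zero x⟩)
    exact hxH j hj

end StarCoset

theorem pairwise_disjoint_starCollection (hD : ∀ j, D ≤ H j)
    (hinf : ∀ i j, i ≠ j → H i ⊓ H j ≤ D) :
    Pairwise fun p q => Disjoint (starCollection H D p) (starCollection H D q) := by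
  rintro (i | S) (j | S') hpq <;> rw [Set.disjoint_left]
  · rintro x ⟨hxi, hxD⟩ ⟨hxj, -⟩
    exact hxD (hinf i j (fun h => hpq (congrArg Sum.inl h)) ⟨hxi, hxj⟩)
  · rintro x ⟨hxi, -⟩ hxS
    exact S'.notMem hD hxS i hxi
  · rintro x hxS ⟨hxj, -⟩
    exact S.notMem hD hxS j hxj
  · intro x hxS hxS'
    exact hpq (congrArg Sum.inr (StarCoset.eq_of_mem hxS hxS'))

theorem iUnion_starCollection [NeZero t] (hD : ∀ j, D ≤ H j) :
    ⋃ p, starCollection H D p = ((⨆ i, H i : AddSubgroup G) : Set G) \ D := by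
  have hDU : D ≤ ⨆ i, H i := le_iSup_of_le 0 (hD 0)
  ext x
  simp only [Set.mem_iUnion, Sum.exists, starCollection, Sum.elim_inl, Sum.elim_inr]
  constructor
  · rintro (⟨i, hxi, hxD⟩ | ⟨S, hxS⟩)
    · exact ⟨le_iSup H i hxi, hxD⟩
    · exact ⟨S.2.2.1 hxS, fun hxD => S.notMem hD hxS 0 (hD 0 hxD)⟩
  · rintro ⟨hx, hxD⟩
    by_cases hxH : ∃ i, x ∈ H i
    · obtain ⟨i, hxi⟩ := hxH
      exact Or.inl ⟨i, hxi, hxD⟩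
    · exact Or.inr (StarCoset.exists_mem hDU hx (not_exists.1 hxH))

theorem isBimodal_starCollection [NeZero t] (hD : ∀ j, D ≤ H j)
    (hinf : ∀ i j, i ≠ j → H i ⊓ H j ≤ D) : IsBimodal (starCollection H D) := by
  refine isBimodal_of_isUnionOfCosets fun p => ?_
  rw [setOf_exists_ne_mem_eq_iUnion_sdiff (pairwise_disjoint_starCollection hD hinf),
    iUnion_starCollection hD, Set.sdiff_sdiff]
  rcases p with i | S
  · refine IsUnionOfCosets.mono (idg_le_of_sub_mem fun x hx y hy => (H i).sub_mem hx.1 hy.1) ?_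
    rw [starCollection, Sum.elim_inl, Set.union_sdiff_cancel (hD i)]
    exact (IsUnionOfCosets.of_le (le_iSup H i)).sdiff (IsUnionOfCosets.of_le le_rfl)
  · refine IsUnionOfCosets.mono (idg_le_of_sub_mem fun x hx y hy => S.sub_mem hx hy) ?_
    exact (IsUnionOfCosets.of_le (le_iSup_of_le 0 (hD 0))).sdiff
      ((IsUnionOfCosets.of_le le_rfl).union S.isUnionOfCosets)

end

theorem star_construction_bimodal_general {t : ℕ} (ht : 2 ≤ t) (H : Fin t → AddSubgroup G)
    (D : AddSubgroup G)
    (hstar : ∀ i j, i ≠ j → H i ⊓ H j = D) :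
    IsBimodal
      (Sum.elim (fun i : Fin t => (H i : Set G) \ (D : Set G))
        (fun S : {S : Set G // (∃ g : G, S = (g + ·) '' (D : Set G)) ∧
            S ⊆ ((⨆ i, H i : AddSubgroup G) : Set G) ∧
            ¬ S ⊆ ⋃ i, (H i : Set G)} => S.1)) := by
  have : NeZero t := ⟨by omega⟩
  have hD : ∀ j, D ≤ H j := fun j => by
    obtain ⟨k, hkj⟩ := Fintype.exists_ne_of_one_lt_card (by rw [Fintype.card_fin]; omega) j
    exact hstar j k hkj.symm ▸ inf_le_left
  exact isBimodal_starCollection hD fun i j hij => (hstar i j hij).le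

/-- The sets `H i \ D` of a `t`-star, together with all cosets of `D`
contained in `H = H 1 + ... + H t` but not contained in `⋃ i, H i`, form a bimodal
collection. -/
theorem star_construction_bimodal {t : ℕ} (ht : 2 ≤ t) (H : Fin t → AddSubgroup G)
    (hinj : Function.Injective H) (D : AddSubgroup G)
    (hstar : ∀ i j, i ≠ j → H i ⊓ H j = D)
    (hindex : ∀ i, 2 < D.relIndex (H i)) :
    IsBimodal
      (Sum.elim (fun i : Fin t => (H i : Set G) \ (D : Set G))
        (fun S : {S : Set G // (∃ g : G, S = (g + ·) '' (D : Set G)) ∧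
            S ⊆ ((⨆ i, H i : AddSubgroup G) : Set G) ∧
            ¬ S ⊆ ⋃ i, (H i : Set G)} => S.1)) :=
  star_construction_bimodal_general ht H D hstar
end

section
/- Let {A_1,...,A_m} be a bimodal collection of disjoint subsets of an abelian group G with |A_1| < |H_1| and |A_i| = |H_i| for 2 ≤ i ≤ m, where H_i is the internal difference group of A_i. Let D = H_2 + H_3 + ... + H_m. Then A_1 is a union of cosets of D: for all x ∈ A_1 and d ∈ D, x + d ∈ A_1. -/
set_option linter.unusedSectionVars false
set_option linter.unusedVariables false


variable {G : Type*} [AddCommGroup G] [Fintype G]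

/-- The subgroup of translations preserving a set. -/
def stabSet (s : Set G) : AddSubgroup G where
  carrier := {d | ∀ x, x ∈ s ↔ x + d ∈ s}
  zero_mem' := by intro x; simp
  add_mem' := by
    intro a b ha hb x
    rw [ha x, hb (x + a), add_assoc]
  neg_mem' := by
    intro a ha x
    rw [ha (x + -a)]
    simp

lemma mem_stabSet {s : Set G} {d : G} : d ∈ stabSet s ↔ ∀ x, x ∈ s ↔ x + d ∈ s := Iff.rfl

lemma key_step {m : ℕ} {A : Fin (m + 1) → Set G}
    (hdisj : ∀ i j, i ≠ j → Disjoint (A i) (A j)) (hbim : IsBimodal A)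
    (k : Fin (m + 1)) {b : G} (hb : ∃ j, j ≠ k ∧ b ∈ A j)
    {a a' : G} (ha : a ∈ A k) (ha' : a' ∈ A k) :
    ∃ j, j ≠ k ∧ b + (a' - a) ∈ A j := by
  obtain ⟨j, hj, hbj⟩ := hb
  have hδ : a - b ≠ 0 := by
    intro h
    rw [sub_eq_zero] at h
    exact Set.disjoint_left.mp (hdisj k j (Ne.symm hj)) ha (h ▸ hbj)
  set S : Set G := {x : G | x ∈ A k ∧ ∃ j', j' ≠ k ∧ x - (a - b) ∈ A j'} with hS
  have haS : a ∈ S := ⟨ha, j, hj, by simpa using hbj⟩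
  have hcount := bimodalCount_eq A k (a - b)
  have hSsub : S ⊆ A k := fun x hx => hx.1
  rcases hbim (a - b) hδ k with h0 | hfull
  · exfalso
    rw [hcount, Set.ncard_eq_zero (Set.toFinite S)] at h0
    exact absurd h0 (Set.nonempty_iff_ne_empty.mp ⟨a, haS⟩)
  · have hSA : S = A k :=
      Set.eq_of_subset_of_ncard_le hSsub (by rw [← hcount, hfull]) (Set.toFinite _)
    have ha'S : a' ∈ S := hSA ▸ ha'
    obtain ⟨-, j', hj', hx⟩ := ha'S
    refine ⟨j', hj', ?_⟩
    convert hx using 1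
    abel

lemma bset_stab {m : ℕ} {A : Fin (m + 1) → Set G}
    (hdisj : ∀ i j, i ≠ j → Disjoint (A i) (A j)) (hbim : IsBimodal A)
    (k : Fin (m + 1)) :
    idg (A k) ≤ stabSet {y : G | ∃ j, j ≠ k ∧ y ∈ A j} := by
  rw [idg, AddSubgroup.closure_le]
  rintro d ⟨u, hu, v, hv, rfl⟩
  rw [SetLike.mem_coe, mem_stabSet]
  intro y
  constructor
  · intro hy
    exact key_step hdisj hbim k hy hv hu
  · intro hy
    obtain ⟨j', hj', hm⟩ := key_step hdisj hbim k hy hu hv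
    refine ⟨j', hj', ?_⟩
    have : y + (u - v) + (v - u) = y := by abel
    rwa [this] at hm

lemma coset_full {m : ℕ} {A : Fin (m + 1) → Set G}
    (hfull : ∀ i : Fin (m + 1), i ≠ 0 → (A i).ncard = Nat.card (idg (A i)))
    {i : Fin (m + 1)} (hi : i ≠ 0) {x : G} (hx : x ∈ A i)
    {h : G} (hh : h ∈ idg (A i)) : x + h ∈ A i := by
  have hsub : A i ⊆ (x + ·) '' (idg (A i) : Set G) := by
    intro y hy
    exact ⟨y - x, AddSubgroup.subset_closure ⟨y, hy, x, hx, rfl⟩, add_sub_cancel x y⟩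
  have hcard : ((x + ·) '' (idg (A i) : Set G)).ncard ≤ (A i).ncard := by
    rw [Set.ncard_image_of_injective _ (add_right_injective x), hfull i hi]
    rfl
  have heq : A i = (x + ·) '' (idg (A i) : Set G) :=
    Set.eq_of_subset_of_ncard_le hsub hcard (Set.toFinite _)
  rw [heq]
  exact ⟨h, hh, rfl⟩


/-- In the situation where only `A 0` fails to fill its coset, `A 0` is a
union of cosets of `D = H 1 + ... + H m`. -/
theorem bimodal_r_one_union_of_cosets {m : ℕ} (hm : 1 ≤ m) (A : Fin (m + 1) → Set G)
    (hne : ∀ i, (A i).Nonempty)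
    (hdisj : ∀ i j, i ≠ j → Disjoint (A i) (A j))
    (hbim : IsBimodal A)
    (h0 : (A 0).ncard < Nat.card (idg (A 0)))
    (hfull : ∀ i : Fin (m + 1), i ≠ 0 → (A i).ncard = Nat.card (idg (A i)))
    (D : AddSubgroup G)
    (hD : D = ⨆ i : {i : Fin (m + 1) // i ≠ 0}, idg (A i.1)) :
    ∀ x ∈ A 0, ∀ d ∈ D, x + d ∈ A 0 := by
  intro x hx d hd
  have hB0stab : idg (A 0) ≤ stabSet {y : G | ∃ j, j ≠ 0 ∧ y ∈ A j} :=
    bset_stab hdisj hbim 0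
  have hUstab : D ≤ stabSet {y : G | ∃ j, y ∈ A j} := by
    rw [hD]
    apply iSup_le
    rintro ⟨i, hi⟩
    have hfwd : ∀ h' ∈ idg (A i), ∀ y, (∃ j, y ∈ A j) → ∃ j, y + h' ∈ A j := by
      intro h' hh' y ⟨j, hyj⟩
      by_cases hji : j = i
      · exact ⟨i, coset_full hfull hi (hji ▸ hyj) hh'⟩
      · obtain ⟨j', _, hm'⟩ :=
          mem_stabSet.mp (bset_stab hdisj hbim i hh') y |>.mp ⟨j, hji, hyj⟩
        exact ⟨j', hm'⟩
    intro h hh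
    rw [mem_stabSet]
    intro y
    constructor
    · exact fun hy => hfwd h hh y hy
    · intro hy
      have := hfwd (-h) (neg_mem hh) _ hy
      simpa using this
  by_contra hxd
  obtain ⟨j, hjx⟩ : ∃ j, x + d ∈ A j := mem_stabSet.mp (hUstab hd) x |>.mp ⟨0, hx⟩
  have hj0 : j ≠ 0 := fun h => hxd (h ▸ hjx)
  have hxdB0 : ∃ j', j' ≠ 0 ∧ x + d ∈ A j' := ⟨j, hj0, hjx⟩
  have hsub : (x + ·) '' (idg (A 0) : Set G) ⊆ A 0 := by
    rintro y ⟨h, hh, rfl⟩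
    have h1 : ∃ j', j' ≠ 0 ∧ x + d + h ∈ A j' :=
      mem_stabSet.mp (hB0stab hh) (x + d) |>.mp hxdB0
    have h2 : ∃ j', x + h + d ∈ A j' := by
      obtain ⟨j', _, hm'⟩ := h1
      refine ⟨j', ?_⟩
      have : x + h + d = x + d + h := by abel
      rwa [this]
    have h3 : ∃ j', x + h ∈ A j' := mem_stabSet.mp (hUstab hd) (x + h) |>.mpr h2
    obtain ⟨j', hj'⟩ := h3
    by_cases hj'0 : j' = 0
    · exact hj'0 ▸ hj'
    · exfalso
      have hxB0 : ∃ j'', j'' ≠ 0 ∧ x ∈ A j'' := by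
        have := mem_stabSet.mp (hB0stab (neg_mem hh)) (x + h) |>.mp ⟨j', hj'0, hj'⟩
        simpa using this
      obtain ⟨j'', hj''0, hj''⟩ := hxB0
      exact Set.disjoint_left.mp (hdisj 0 j'' (Ne.symm hj''0)) hx hj''
  have hcard : Nat.card (idg (A 0)) ≤ (A 0).ncard := by
    calc Nat.card (idg (A 0)) = ((idg (A 0) : Set G)).ncard := rfl
      _ = ((x + ·) '' (idg (A 0) : Set G)).ncard :=
        (Set.ncard_image_of_injective _ (add_right_injective x)).symm
      _ ≤ (A 0).ncard := Set.ncard_le_ncard hsub (Set.toFinite _)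
  omega
end

section
/- Let {A_1,...,A_m} be a bimodal collection of disjoint subsets of an abelian group G such that each A_i is a full coset of its internal difference group H_i (|A_i| = |H_i| for all i). Let H = H_1 + H_2 + ... + H_m and A = ⋃_{i=1}^m A_i. Then A is a union of cosets of H: for all x ∈ A and h ∈ H, x + h ∈ A. -/
variable {G : Type*} [AddCommGroup G] [Fintype G]

/-- A full coset: if `|X| = |idg X|` then `X` is closed under adding `idg X`. -/
lemma coset_lemma (X : Set G) (hX : X.ncard = Nat.card (idg X))
    {x : G} (hx : x ∈ X) {h : G} (hh : h ∈ idg X) : x + h ∈ X := by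
  have hsub : (fun a => a - x) '' X ⊆ (idg X : Set G) := by
    rintro _ ⟨a, ha, rfl⟩
    exact AddSubgroup.subset_closure ⟨a, ha, x, hx, rfl⟩
  have hinj : Set.InjOn (fun a => a - x) X := fun a _ b _ hab => by
    simpa using hab
  have hcard : ((idg X : Set G)).ncard ≤ ((fun a => a - x) '' X).ncard := by
    rw [Set.ncard_image_of_injOn hinj, hX, ← Nat.card_coe_set_eq]
    exact le_rfl
  have heq : (fun a => a - x) '' X = (idg X : Set G) :=
    Set.eq_of_subset_of_ncard_le hsub hcard (Set.toFinite _)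
  have : h ∈ (fun a => a - x) '' X := heq ▸ hh
  obtain ⟨a, ha, hax⟩ := this
  have : x + h = a := by simp at hax; rw [← hax]; abel
  rwa [this]

/-- Bimodal step: translating a point of `A i` by a difference from `A j` (`j ≠ i`)
stays in the union. -/
lemma bimodal_step {m : ℕ} (A : Fin m → Set G)
    (hdisj : ∀ i j, i ≠ j → Disjoint (A i) (A j))
    (hbim : IsBimodal A) {i j : Fin m} (hij : i ≠ j)
    {y a a' : G} (hy : y ∈ A i) (ha : a ∈ A j) (ha' : a' ∈ A j) :
    y + (a - a') ∈ ⋃ k, A k := by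
  set δ : G := a' - y with hδ
  have hδne : δ ≠ 0 := by
    intro h0
    have : a' = y := by rwa [hδ, sub_eq_zero] at h0
    exact (hdisj i j hij).ne_of_mem hy (this ▸ ha') rfl
  set C : Set (G × G) :=
    {p : G × G | p.1 ∈ A j ∧ (∃ k, k ≠ j ∧ p.2 ∈ A k) ∧ p.1 - p.2 = δ} with hC
  have hmem : (a', y) ∈ C := ⟨ha', ⟨i, hij, hy⟩, by simp [hδ]⟩
  have hcount : bimodalCount A j δ = (A j).ncard := by
    rcases hbim δ hδne j with h0 | h
    · exfalso
      have : C.ncard ≠ 0 := Set.ncard_ne_zero_of_mem hmem (Set.toFinite _)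
      exact this h0
    · exact h
  -- project to first coordinate
  have hproj : Prod.fst '' C ⊆ A j := by rintro _ ⟨p, hp, rfl⟩; exact hp.1
  have hinj : Set.InjOn Prod.fst C := by
    rintro p hp q hq hpq
    have h1 : p.2 = p.1 - δ := by rw [← hp.2.2]; abel
    have h2 : q.2 = q.1 - δ := by rw [← hq.2.2]; abel
    exact Prod.ext hpq (by rw [h1, h2, hpq])
  have hle : (A j).ncard ≤ (Prod.fst '' C).ncard := by
    rw [Set.ncard_image_of_injOn hinj, ← hcount]
    exact le_of_eq rfl
  have heq : Prod.fst '' C = A j :=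
    Set.eq_of_subset_of_ncard_le hproj hle (Set.toFinite _)
  have haC : a ∈ Prod.fst '' C := heq ▸ ha
  obtain ⟨p, hp, hp1⟩ := haC
  obtain ⟨-, ⟨k, hkj, hk⟩, hps⟩ := hp
  have hp2 : p.2 = y + (a - a') := by
    rw [hp1] at hps
    have : p.2 = a - δ := by rw [← hps]; abel
    rw [this, hδ]; abel
  exact Set.mem_iUnion.2 ⟨k, hp2 ▸ hk⟩

/-- If every set of a bimodal collection is a full coset of its internal
difference group, then `A = ⋃ A i` is a union of cosets of `H = H 1 + ... + H m`. -/
theorem bimodal_r_zero_union_of_cosets {m : ℕ} (A : Fin m → Set G)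
    (hne : ∀ i, (A i).Nonempty)
    (hdisj : ∀ i j, i ≠ j → Disjoint (A i) (A j))
    (hbim : IsBimodal A)
    (hfull : ∀ i, (A i).ncard = Nat.card (idg (A i)))
    (H : AddSubgroup G) (hH : H = ⨆ i, idg (A i)) :
    ∀ x ∈ ⋃ i, A i, ∀ h ∈ H, x + h ∈ ⋃ i, A i := by
  subst hH
  set U : Set G := ⋃ i, A i with hU
  let S : AddSubgroup G :=
  { carrier := {h | ∀ x ∈ U, x + h ∈ U}
    zero_mem' := fun x hx => by simpa using hx
    add_mem' := fun {h h'} hh hh' x hx => by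
      rw [← add_assoc]; exact hh' _ (hh x hx)
    neg_mem' := fun {h} hh x hx => by
      have hmaps : Set.MapsTo (fun a => a + h) U U := fun a ha => hh a ha
      have hinj : Set.InjOn (fun a => a + h) U := fun a _ b _ e => by simpa using e
      have hbij := (Set.Finite.injOn_iff_bijOn_of_mapsTo (Set.toFinite U) hmaps).1 hinj
      obtain ⟨a, ha, hax⟩ := hbij.surjOn hx
      have : x + -h = a := by simp only at hax; rw [← hax]; abel
      rwa [this] }
  have hle : (⨆ i, idg (A i)) ≤ S := by
    refine iSup_le fun i => ?_
    show AddSubgroup.closure _ ≤ S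
    refine (AddSubgroup.closure_le S).2 ?_
    rintro d ⟨a, ha, a', ha', rfl⟩
    intro x hx
    rcases Set.mem_iUnion.1 hx with ⟨k, hk⟩
    by_cases hki : k = i
    · subst hki
      have : x + (a - a') ∈ A k :=
        coset_lemma (A k) (hfull k) hk (AddSubgroup.subset_closure ⟨a, ha, a', ha', rfl⟩)
      exact Set.mem_iUnion.2 ⟨k, this⟩
    · exact bimodal_step A hdisj hbim hki hk ha ha'
  intro x hx h hh
  exact hle hh x hx
end
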